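/- arXiv:1010.0817 — 4 statements merged into one kernel-verified Lean document; each statement's English description precedes it below -/
import Mathlib

section
/- Let n, m ≥ 1 and let f, g be measurable functions on ℝ^n × ℝ^m. Then ‖f·g‖_{L¹(ℝ^{n+m})} ≤ ‖f‖_X · ‖g‖_{X*}. -/
open MeasureTheory ENNReal Real

noncomputable section

/-- Points of the waveguide ambient space `ℝ^n × ℝ^m`. -/
abbrev Pt (n m : ℕ) := EuclideanSpace ℝ (Fin n) × EuclideanSpace ℝ (Fin m)

variable {n m : ℕ}

/-- `L²` norm over a subset of `ℝ^{n+m}`. -/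
def L2 {F : Type*} [NormedAddCommGroup F] (f : Pt n m → F) (S : Set (Pt n m)) : ℝ≥0∞ :=
  eLpNorm f 2 (volume.restrict S)

/-- Morrey–Campanato norm `‖f‖_X = sup_{R>0} R^{-1/2} ‖f‖_{L²(|x|≤R)}`. -/
def normX {F : Type*} [NormedAddCommGroup F] (f : Pt n m → F) : ℝ≥0∞ :=
  ⨆ (R : ℝ) (_ : 0 < R), ENNReal.ofReal (R ^ (-(1:ℝ)/2)) * L2 f {p : Pt n m | ‖p.1‖ ≤ R}

/-- Morrey–Campanato norm `‖f‖_{X₁} = sup_{R>0} R^{-3/2} ‖f‖_{L²(|x|≤R)}`. -/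
def normX1 {F : Type*} [NormedAddCommGroup F] (f : Pt n m → F) : ℝ≥0∞ :=
  ⨆ (R : ℝ) (_ : 0 < R), ENNReal.ofReal (R ^ (-(3:ℝ)/2)) * L2 f {p : Pt n m | ‖p.1‖ ≤ R}

/-- Dual Morrey–Campanato norm
`‖f‖_{X*} = Σ_{j∈ℤ} 2^{j/2} ‖f‖_{L²(2^{j-1}≤|x|≤2^j)}`. -/
def normXstar {F : Type*} [NormedAddCommGroup F] (f : Pt n m → F) : ℝ≥0∞ :=
  ∑' j : ℤ, ENNReal.ofReal ((2:ℝ) ^ ((j:ℝ)/2)) *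
    L2 f {p : Pt n m | (2:ℝ)^(j-1) ≤ ‖p.1‖ ∧ ‖p.1‖ ≤ (2:ℝ)^j}

/-- Standard basis vector in the `x` variables. -/
def ex (n m : ℕ) (i : Fin n) : Pt n m := (EuclideanSpace.single i 1, 0)

/-- Standard basis vector in the `y` variables. -/
def ey (n m : ℕ) (i : Fin m) : Pt n m := (0, EuclideanSpace.single i 1)

/-- Laplacian in all `n+m` variables. -/
def lap (u : Pt n m → ℂ) (p : Pt n m) : ℂ :=
  (∑ i : Fin n, fderiv ℝ (fun q => fderiv ℝ u q (ex n m i)) p (ex n m i)) +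
  ∑ i : Fin m, fderiv ℝ (fun q => fderiv ℝ u q (ey n m i)) p (ey n m i)

/-- Pointwise euclidean norm of the gradient in the `x` variables only. -/
def gradXnorm (u : Pt n m → ℂ) (p : Pt n m) : ℝ :=
  Real.sqrt (∑ i : Fin n, ‖fderiv ℝ u p (ex n m i)‖^2)

/-- Pointwise squared euclidean norm of the full gradient. -/
def gradNormSq (u : Pt n m → ℂ) (p : Pt n m) : ℝ :=
  (∑ i : Fin n, ‖fderiv ℝ u p (ex n m i)‖^2) +
  ∑ i : Fin m, ‖fderiv ℝ u p (ey n m i)‖^2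

/-- The right hand side `f := -Δu - (λ+iε)u + Vu` of the resolvent equation. -/
def resf (V : Pt n m → ℝ) (lam eps : ℝ) (u : Pt n m → ℂ) : Pt n m → ℂ :=
  fun p => -lap u p - (lam + eps * Complex.I) * u p + (V p : ℂ) * u p

/-- A repulsive potential: nonnegative, continuous, `C¹` in `x` for `x ≠ 0`, and
`x·∇ₓ(|x| V) ≤ 0` for `x ≠ 0`. -/
structure IsRepulsive (V : Pt n m → ℝ) : Prop where
  nonneg : ∀ p, 0 ≤ V p
  continuous : Continuous V
  cdiff : ∀ y : EuclideanSpace ℝ (Fin m), ContDiffOn ℝ 1 (fun x => V (x, y)) {x | x ≠ 0}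
  repulsive : ∀ (x : EuclideanSpace ℝ (Fin n)) (y : EuclideanSpace ℝ (Fin m)), x ≠ 0 →
    fderiv ℝ (fun x' : EuclideanSpace ℝ (Fin n) => ‖x'‖ * V (x', y)) x x ≤ 0

/-!
Up to the null set `{x = 0}`, `ℝ^n × ℝ^m` is covered by the dyadic shells
`A_j = {2^{j-1} ≤ |x| ≤ 2^j}`. On `A_j`, Cauchy–Schwarz bounds `‖fg‖_{L¹(A_j)}` by
`‖f‖_{L²(A_j)} ‖g‖_{L²(A_j)}`, and `A_j ⊆ {|x| ≤ 2^j}` gives `‖f‖_{L²(A_j)} ≤ 2^{j/2} ‖f‖_X`.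
Summing over `j` yields `‖f‖_X ‖g‖_{X*}`.
-/

def dyadicShell {α : Type*} (r : α → ℝ) (j : ℤ) : Set α :=
  {x | (2:ℝ) ^ (j - 1) ≤ r x ∧ r x ≤ (2:ℝ) ^ j}

theorem lintegral_le_tsum_setLIntegral_dyadicShell {α : Type*} [MeasurableSpace α]
    {μ : Measure α} {r : α → ℝ} (hr : ∀ᵐ x ∂μ, 0 < r x) (F : α → ℝ≥0∞) :
    ∫⁻ x, F x ∂μ ≤ ∑' j : ℤ, ∫⁻ x in dyadicShell r j, F x ∂μ := by
  have hcover : ∀ᵐ x ∂μ, x ∈ ⋃ j : ℤ, dyadicShell r j := by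
    filter_upwards [hr] with x hx
    obtain ⟨j, hlo, hhi⟩ := exists_mem_Ioc_zpow hx one_lt_two
    exact Set.mem_iUnion.2 ⟨j + 1, by simpa using hlo.le, hhi⟩
  calc ∫⁻ x, F x ∂μ = ∫⁻ x in ⋃ j : ℤ, dyadicShell r j, F x ∂μ := by
        rw [Measure.restrict_eq_self_of_ae_mem hcover]
    _ ≤ ∑' j : ℤ, ∫⁻ x in dyadicShell r j, F x ∂μ := lintegral_iUnion_le _ _

theorem ae_norm_fst_pos (hn : 1 ≤ n) : ∀ᵐ p : Pt n m, 0 < ‖p.1‖ := by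
  have : Nontrivial (EuclideanSpace ℝ (Fin n)) :=
    Module.nontrivial_of_finrank_pos (R := ℝ) (by rw [finrank_euclideanSpace_fin]; omega)
  rw [Measure.volume_eq_prod]
  filter_upwards [Measure.quasiMeasurePreserving_fst.ae (volume.ae_ne 0)] with p hp
  exact norm_pos_iff.2 hp

theorem lintegral_enorm_mul_le_eLpNorm_two_mul {α 𝕜 : Type*} [MeasurableSpace α]
    {μ : Measure α} [NormedRing 𝕜] {f g : α → 𝕜}
    (hf : AEStronglyMeasurable f μ) (hg : AEStronglyMeasurable g μ) :
    ∫⁻ x, ‖f x * g x‖ₑ ∂μ ≤ eLpNorm f 2 μ * eLpNorm g 2 μ := by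
  have h := eLpNorm_smul_le_mul_eLpNorm (p := 2) (q := 2) (r := 1) hg hf
  rwa [eLpNorm_one_eq_lintegral_enorm] at h

theorem L2_le_rpow_mul_normX {F : Type*} [NormedAddCommGroup F] (f : Pt n m → F)
    {R : ℝ} (hR : 0 < R) :
    L2 f {p : Pt n m | ‖p.1‖ ≤ R} ≤ ENNReal.ofReal (R ^ ((1:ℝ) / 2)) * normX f := by
  have hX : ENNReal.ofReal (R ^ (-(1:ℝ) / 2)) * L2 f {p : Pt n m | ‖p.1‖ ≤ R} ≤ normX f :=
    le_iSup₂ (f := fun R (_ : 0 < R) =>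
      ENNReal.ofReal (R ^ (-(1:ℝ) / 2)) * L2 f {p : Pt n m | ‖p.1‖ ≤ R}) R hR
  have hinv : ENNReal.ofReal (R ^ ((1:ℝ) / 2)) * ENNReal.ofReal (R ^ (-(1:ℝ) / 2)) = 1 := by
    rw [← ENNReal.ofReal_mul (by positivity), ← Real.rpow_add hR]
    norm_num
  calc L2 f {p : Pt n m | ‖p.1‖ ≤ R}
      = ENNReal.ofReal (R ^ ((1:ℝ) / 2)) *
          (ENNReal.ofReal (R ^ (-(1:ℝ) / 2)) * L2 f {p : Pt n m | ‖p.1‖ ≤ R}) := by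
        rw [← mul_assoc, hinv, one_mul]
    _ ≤ ENNReal.ofReal (R ^ ((1:ℝ) / 2)) * normX f := by gcongr

theorem setLIntegral_dyadicShell_le_normX_mul_L2 {𝕜 : Type*} [NormedRing 𝕜]
    {f g : Pt n m → 𝕜} (hf : AEStronglyMeasurable f) (hg : AEStronglyMeasurable g) (j : ℤ) :
    ∫⁻ p in dyadicShell (fun p : Pt n m => ‖p.1‖) j, ‖f p * g p‖ₑ ≤
      normX f * (ENNReal.ofReal ((2:ℝ) ^ ((j:ℝ) / 2)) *
        L2 g (dyadicShell (fun p : Pt n m => ‖p.1‖) j)) := by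
  set A := dyadicShell (fun p : Pt n m => ‖p.1‖) j
  have hsub : A ⊆ {p : Pt n m | ‖p.1‖ ≤ (2:ℝ) ^ j} := fun p hp => hp.2
  have hexp : ((2:ℝ) ^ j) ^ ((1:ℝ) / 2) = (2:ℝ) ^ ((j:ℝ) / 2) := by
    rw [← Real.rpow_intCast, ← Real.rpow_mul zero_le_two, mul_one_div]
  calc ∫⁻ p in A, ‖f p * g p‖ₑ
      ≤ L2 f A * L2 g A := lintegral_enorm_mul_le_eLpNorm_two_mul hf.restrict hg.restrict
    _ ≤ L2 f {p : Pt n m | ‖p.1‖ ≤ (2:ℝ) ^ j} * L2 g A := by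
        gcongr
        exact eLpNorm_mono_measure _ (Measure.restrict_mono hsub le_rfl)
    _ ≤ ENNReal.ofReal ((2:ℝ) ^ ((j:ℝ) / 2)) * normX f * L2 g A := by
        gcongr
        rw [← hexp]
        exact L2_le_rpow_mul_normX f (zpow_pos two_pos j)
    _ = normX f * (ENNReal.ofReal ((2:ℝ) ^ ((j:ℝ) / 2)) * L2 g A) := by ring

theorem X_Xstar_holder_general (n m : ℕ) (hn : 1 ≤ n)
    (f g : Pt n m → ℂ) (hf : Measurable f) (hg : Measurable g) :
    eLpNorm (fun p => f p * g p) 1 volume ≤ normX f * normXstar g := by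
  calc eLpNorm (fun p => f p * g p) 1 volume = ∫⁻ p, ‖f p * g p‖ₑ :=
        eLpNorm_one_eq_lintegral_enorm
    _ ≤ ∑' j : ℤ, ∫⁻ p in dyadicShell (fun p : Pt n m => ‖p.1‖) j, ‖f p * g p‖ₑ :=
        lintegral_le_tsum_setLIntegral_dyadicShell (ae_norm_fst_pos hn) _
    _ ≤ ∑' j : ℤ, normX f * (ENNReal.ofReal ((2:ℝ) ^ ((j:ℝ) / 2)) *
          L2 g (dyadicShell (fun p : Pt n m => ‖p.1‖) j)) :=
        ENNReal.tsum_le_tsum fun j =>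
          setLIntegral_dyadicShell_le_normX_mul_L2 hf.aestronglyMeasurable hg.aestronglyMeasurable j
    _ = normX f * normXstar g := ENNReal.tsum_mul_left

/-- `‖fg‖_{L¹} ≤ ‖f‖_X ‖g‖_{X*}`. -/
theorem X_Xstar_holder (n m : ℕ) (hn : 1 ≤ n) (hm : 1 ≤ m)
    (f g : Pt n m → ℂ) (hf : Measurable f) (hg : Measurable g) :
    eLpNorm (fun p => f p * g p) 1 volume ≤ normX f * normXstar g :=
  X_Xstar_holder_general n m hn f g hf hg
end
end

section
/- Let n, m ≥ 1, let u be a measurable function on ℝ^n × ℝ^m, and let s > 0, R > 0. Then ∫_{ℝ^{n+m}} (R + |x|²/R)^{-s} |u(x,y)|² dx dy ≤ (2^{4s}/(2^s − 1)) · sup_{ρ>0} ρ^{-s} ∫_{{|x|<ρ}} |u(x,y)|² dx dy, where the inner integral is over the set of (x,y) with |x| < ρ. -/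
open MeasureTheory ENNReal Real

noncomputable section

variable {n m : ℕ}

/-! Each point `(x, y)` lies in a ball `{|x| < 2^(k+1) R}` with `2^k R ≤ max (|x|, R)`, on which the
weight is at most `(4^k R)^(-s)`, while the mass of that ball is at most `(2^(k+1) R)^s` times the
supremum. Dominating the weight by the sum of these bounds over all `k` and integrating gives the
geometric series `∑ 2^s 2^(-k s) = 4^s / (2^s - 1)`. -/

lemma exists_lt_two_pow_succ_mul_and_four_pow_mul_le {R : ℝ} (hR : 0 < R) (t : ℝ) :
    ∃ k : ℕ, t < 2 ^ (k + 1) * R ∧ 4 ^ k * R ≤ R + t ^ 2 / R := by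
  have hx : 1 ≤ max t R / R := by rw [le_div_iff₀ hR, one_mul]; exact le_max_right t R
  obtain ⟨k, hk, hk'⟩ := exists_nat_pow_near hx one_lt_two
  rw [le_div_iff₀ hR] at hk
  rw [div_lt_iff₀ hR] at hk'
  refine ⟨k, (le_max_left t R).trans_lt hk', ?_⟩
  have hmax : max t R ^ 2 ≤ R ^ 2 + t ^ 2 := by
    rcases max_cases t R with ⟨h, -⟩ | ⟨h, -⟩ <;> rw [h] <;> nlinarith
  calc (4 : ℝ) ^ k * R = (2 ^ k * R) ^ 2 / R := by
        rw [mul_pow, ← pow_mul, mul_comm k 2, pow_mul]; field_simp; norm_num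
    _ ≤ max t R ^ 2 / R := by gcongr
    _ ≤ (R ^ 2 + t ^ 2) / R := by gcongr
    _ = R + t ^ 2 / R := by field_simp

lemma le_ofReal_rpow_mul_iSup (I : ℝ → ℝ≥0∞) (s : ℝ) {ρ : ℝ} (hρ : 0 < ρ) :
    I ρ ≤ ENNReal.ofReal (ρ ^ s) * ⨆ (r : ℝ) (_ : 0 < r), ENNReal.ofReal (r ^ (-s)) * I r :=
  calc I ρ = ENNReal.ofReal (ρ ^ s) * (ENNReal.ofReal (ρ ^ (-s)) * I ρ) := by
        rw [← mul_assoc, ← ENNReal.ofReal_mul (by positivity), ← Real.rpow_add hρ]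
        simp
    _ ≤ _ := by gcongr; exact le_iSup₂_of_le ρ hρ le_rfl

lemma four_pow_mul_rpow_neg_mul_two_pow_succ_mul_rpow {R : ℝ} (hR : 0 < R) (s : ℝ) (k : ℕ) :
    ((4 : ℝ) ^ k * R) ^ (-s) * ((2 : ℝ) ^ (k + 1) * R) ^ s = 2 ^ s * ((2 ^ s)⁻¹) ^ k := by
  have h4 : (4 : ℝ) ^ k = 2 ^ k * 2 ^ k := by rw [← mul_pow]; norm_num
  have h2k : ((2 : ℝ) ^ k) ^ s = (2 ^ s) ^ k := (rpow_pow_comm zero_le_two s k).symm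
  rw [h4, pow_succ, Real.rpow_neg (by positivity), Real.mul_rpow (by positivity) hR.le,
    Real.mul_rpow (by positivity) (by positivity), Real.mul_rpow (by positivity) hR.le,
    Real.mul_rpow (by positivity) (by positivity), inv_pow, h2k]
  field_simp

lemma tsum_ofReal_four_pow_mul_rpow_neg_mul_two_pow_succ_mul_rpow {R s : ℝ} (hR : 0 < R)
    (hs : 0 < s) :
    ∑' k : ℕ, ENNReal.ofReal (((4 : ℝ) ^ k * R) ^ (-s) * ((2 : ℝ) ^ (k + 1) * R) ^ s) =
      ENNReal.ofReal ((2 ^ s) ^ 2 / (2 ^ s - 1)) := by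
  have hA : (1 : ℝ) < 2 ^ s := Real.one_lt_rpow one_lt_two hs
  have hq : (2 ^ s : ℝ)⁻¹ < 1 := inv_lt_one_of_one_lt₀ hA
  simp_rw [four_pow_mul_rpow_neg_mul_two_pow_succ_mul_rpow hR]
  rw [← ENNReal.ofReal_tsum_of_nonneg (fun k => by positivity)
      ((summable_geometric_of_lt_one (by positivity) hq).mul_left _),
    tsum_mul_left, tsum_geometric_of_lt_one (by positivity) hq]
  congr 1
  have : (2 : ℝ) ^ s - 1 ≠ 0 := by linarith
  field_simp

theorem lintegral_rpow_neg_mul_le_iSup {X : Type*} [MeasurableSpace X] (μ : Measure X)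
    {f : X → ℝ} (hf : Measurable f) {g : X → ℝ≥0∞} (hg : Measurable g) {s R : ℝ} (hs : 0 < s)
    (hR : 0 < R) :
    ∫⁻ x, ENNReal.ofReal ((R + f x ^ 2 / R) ^ (-s)) * g x ∂μ ≤
      ENNReal.ofReal ((2 ^ s) ^ 2 / (2 ^ s - 1)) *
        ⨆ (ρ : ℝ) (_ : 0 < ρ), ENNReal.ofReal (ρ ^ (-s)) * ∫⁻ x in {x | f x < ρ}, g x ∂μ := by
  set M := ⨆ (ρ : ℝ) (_ : 0 < ρ), ENNReal.ofReal (ρ ^ (-s)) * ∫⁻ x in {x | f x < ρ}, g x ∂μ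
  set c : ℕ → ℝ := fun k => ((4 : ℝ) ^ k * R) ^ (-s)
  set ρ : ℕ → ℝ := fun k => (2 : ℝ) ^ (k + 1) * R
  have hS : ∀ k, MeasurableSet {x | f x < ρ k} := fun k => measurableSet_lt hf measurable_const
  have hpointwise : ∀ x, ENNReal.ofReal ((R + f x ^ 2 / R) ^ (-s)) * g x ≤
      ∑' k, ENNReal.ofReal (c k) * {x | f x < ρ k}.indicator g x := by
    intro x
    obtain ⟨k, hlt, hle⟩ := exists_lt_two_pow_succ_mul_and_four_pow_mul_le hR (f x)
    calc ENNReal.ofReal ((R + f x ^ 2 / R) ^ (-s)) * g x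
        ≤ ENNReal.ofReal (c k) * {x | f x < ρ k}.indicator g x := by
          rw [Set.indicator_of_mem (show x ∈ {x | f x < ρ k} from hlt)]
          gcongr
          exact Real.rpow_le_rpow_of_nonpos (by positivity) hle (by linarith)
      _ ≤ _ := ENNReal.le_tsum k
  calc ∫⁻ x, ENNReal.ofReal ((R + f x ^ 2 / R) ^ (-s)) * g x ∂μ
      ≤ ∫⁻ x, ∑' k, ENNReal.ofReal (c k) * {x | f x < ρ k}.indicator g x ∂μ :=
        lintegral_mono hpointwise
    _ = ∑' k, ENNReal.ofReal (c k) * ∫⁻ x in {x | f x < ρ k}, g x ∂μ := by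
        rw [lintegral_tsum fun k => ((hg.indicator (hS k)).const_mul _).aemeasurable]
        congr 1 with k
        rw [lintegral_const_mul _ (hg.indicator (hS k)), lintegral_indicator (hS k)]
    _ ≤ ∑' k, ENNReal.ofReal (c k) * (ENNReal.ofReal (ρ k ^ s) * M) := by
        gcongr with k
        exact le_ofReal_rpow_mul_iSup (fun r => ∫⁻ x in {x | f x < r}, g x ∂μ) s (by positivity)
    _ = (∑' k, ENNReal.ofReal (c k * ρ k ^ s)) * M := by
        rw [← ENNReal.tsum_mul_right]
        congr 1 with k
        rw [← mul_assoc, ← ENNReal.ofReal_mul (Real.rpow_nonneg (by positivity) _)]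
    _ = ENNReal.ofReal ((2 ^ s) ^ 2 / (2 ^ s - 1)) * M := by
        rw [tsum_ofReal_four_pow_mul_rpow_neg_mul_two_pow_succ_mul_rpow hR hs]

theorem weight_to_MC_general (n m : ℕ)
    (u : Pt n m → ℂ) (hu : Measurable u) (s R : ℝ) (hs : 0 < s) (hR : 0 < R) :
    (∫⁻ p : Pt n m,
        ENNReal.ofReal ((R + ‖p.1‖ ^ 2 / R) ^ (-s)) * (‖u p‖₊ : ℝ≥0∞) ^ 2) ≤
      ENNReal.ofReal ((2:ℝ) ^ (4 * s) / ((2:ℝ) ^ s - 1)) *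
        ⨆ (ρ : ℝ) (_ : 0 < ρ), ENNReal.ofReal (ρ ^ (-s)) *
          ∫⁻ p in {p : Pt n m | ‖p.1‖ < ρ}, (‖u p‖₊ : ℝ≥0∞) ^ 2 := by
  have hA : (1 : ℝ) ≤ 2 ^ s := Real.one_le_rpow one_le_two hs.le
  have hconst : ((2 : ℝ) ^ s) ^ 2 / (2 ^ s - 1) ≤ 2 ^ (4 * s) / (2 ^ s - 1) := by
    rw [mul_comm, Real.rpow_mul zero_le_two, Real.rpow_ofNat]
    exact div_le_div_of_nonneg_right (pow_le_pow_right₀ hA (by norm_num)) (by linarith)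
  calc _ ≤ ENNReal.ofReal (((2 : ℝ) ^ s) ^ 2 / (2 ^ s - 1)) * _ :=
        lintegral_rpow_neg_mul_le_iSup volume continuous_fst.norm.measurable
          (hu.nnnorm.coe_nnreal_ennreal.pow_const 2) hs hR
    _ ≤ _ := by gcongr

/-- the weight inequality (2.13) of the paper. -/
theorem weight_to_MC (n m : ℕ) (hn : 1 ≤ n) (hm : 1 ≤ m)
    (u : Pt n m → ℂ) (hu : Measurable u) (s R : ℝ) (hs : 0 < s) (hR : 0 < R) :
    (∫⁻ p : Pt n m,
        ENNReal.ofReal ((R + ‖p.1‖ ^ 2 / R) ^ (-s)) * (‖u p‖₊ : ℝ≥0∞) ^ 2) ≤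
      ENNReal.ofReal ((2:ℝ) ^ (4 * s) / ((2:ℝ) ^ s - 1)) *
        ⨆ (ρ : ℝ) (_ : 0 < ρ), ENNReal.ofReal (ρ ^ (-s)) *
          ∫⁻ p in {p : Pt n m | ‖p.1‖ < ρ}, (‖u p‖₊ : ℝ≥0∞) ^ 2 :=
  weight_to_MC_general n m u hu s R hs hR
end
end

section
/- Let n, m ≥ 1 and let u be a measurable function on ℝ^n × ℝ^m. Then for every R > 0: ‖u‖_{X*} ≤ 16·‖⟨x⟩_R·u‖_{L²(ℝ^{n+m})}. -/
/-! On the dyadic annulus `2^(j-1) ≤ |x| ≤ 2^j` the weight satisfies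
`⟨x⟩_R ≥ max(√R, 2^(j-1)/√R)`, so the `j`-th term of `‖u‖_{X*}` is at most
`c_j · ‖⟨x⟩_R u‖_{L²}` with `c_j = 2^(j/2) / max(√R, 2^(j-1)/√R) ≤ min(2^(j/2)/√R, 2√R/2^(j/2))`.
Splitting `ℤ` at the index `j₀` with `2^(j₀-1) < R ≤ 2^j₀`, the coefficients are bounded by
`2 · (1/√2)^k` at distance `k` on either side, and `1/√2 ≤ 3/4` gives `Σ c_j ≤ 2 · 2 · 4 = 16`. -/

open MeasureTheory ENNReal Real

noncomputable section

variable {n m : ℕ}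

theorem ENNReal.tsum_int_le_of_geometric_decay {f : ℤ → ℝ≥0∞} {C r : ℝ≥0∞} (j₀ : ℤ)
    (hup : ∀ k : ℕ, f (j₀ + k) ≤ C * r ^ k) (hdown : ∀ k : ℕ, f (j₀ - (k + 1)) ≤ C * r ^ k) :
    ∑' j, f j ≤ 2 * C * (1 - r)⁻¹ := by
  calc ∑' j, f j = ∑' i, f (j₀ + i) := ((Equiv.addLeft j₀).tsum_eq f).symm
    _ = ∑' k : ℕ, (f (j₀ + k) + f (j₀ + -(k + 1))) :=
      (tsum_nat_add_neg_add_one ENNReal.summable).symm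
    _ ≤ ∑' k : ℕ, 2 * C * r ^ k := by
      refine ENNReal.tsum_le_tsum fun k => ?_
      rw [← sub_eq_add_neg, mul_assoc, two_mul]
      exact add_le_add (hup k) (hdown k)
    _ = 2 * C * (1 - r)⁻¹ := by rw [ENNReal.tsum_mul_left, ENNReal.tsum_geometric]

lemma two_rpow_int_div_two (j : ℤ) : (2:ℝ) ^ ((j:ℝ) / 2) = √2 ^ j := by
  rw [Real.sqrt_eq_rpow, ← Real.rpow_intCast, ← Real.rpow_mul (by norm_num)]
  ring_nf

lemma two_zpow_sub_one_eq (j : ℤ) : (2:ℝ) ^ (j - 1) = (√2 ^ j) ^ 2 / 2 := by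
  rw [← zpow_natCast, ← zpow_mul, mul_comm, zpow_mul, zpow_natCast, Real.sq_sqrt zero_le_two,
    zpow_sub_one₀ two_ne_zero, div_eq_mul_inv]

lemma inv_sqrt_two_le : (√2)⁻¹ ≤ 3 / 4 := by
  rw [inv_le_comm₀ (by positivity) (by norm_num), Real.le_sqrt (by norm_num) (by norm_num)]
  norm_num

lemma sqrt_two_zpow_mul_inv_max_le {ρ : ℝ} (hρ : 0 < ρ) (j : ℤ) :
    √2 ^ j * (max ρ (2 ^ (j - 1) / ρ))⁻¹ ≤ 2 * ρ / √2 ^ j := by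
  calc √2 ^ j * (max ρ (2 ^ (j - 1) / ρ))⁻¹ ≤ √2 ^ j * (2 ^ (j - 1) / ρ)⁻¹ := by
        gcongr; exact le_max_right _ _
    _ = 2 * ρ / √2 ^ j := by
        rw [two_zpow_sub_one_eq]; field_simp

lemma sqrt_two_zpow_add_mul_inv_max_le {ρ : ℝ} (hρ : 0 < ρ) {j₀ : ℤ} (hj₀ : ρ ≤ √2 ^ j₀)
    (k : ℕ) : √2 ^ (j₀ + k) * (max ρ (2 ^ (j₀ + k - 1) / ρ))⁻¹ ≤ 2 * (3 / 4) ^ k :=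
  calc _ ≤ 2 * ρ / √2 ^ (j₀ + k) := sqrt_two_zpow_mul_inv_max_le hρ _
    _ = 2 * (ρ / √2 ^ j₀) * (√2 ^ k)⁻¹ := by
        rw [zpow_add₀ (by positivity), zpow_natCast]; field_simp
    _ ≤ 2 * 1 * (√2)⁻¹ ^ k := by
        rw [inv_pow]; gcongr; exact div_le_one_of_le₀ hj₀ (by positivity)
    _ ≤ 2 * (3 / 4) ^ k := by rw [mul_one]; gcongr; exact inv_sqrt_two_le

lemma sqrt_two_zpow_sub_mul_inv_max_le {ρ : ℝ} (hρ : 0 < ρ) {j₀ : ℤ} (hj₀ : √2 ^ (j₀ - 1) < ρ)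
    (k : ℕ) : √2 ^ (j₀ - (k + 1)) * (max ρ (2 ^ (j₀ - (k + 1) - 1) / ρ))⁻¹ ≤ (3 / 4) ^ k :=
  calc _ ≤ √2 ^ (j₀ - (k + 1)) * ρ⁻¹ := by gcongr; exact le_max_left _ _
    _ = (√2 ^ (j₀ - 1) / ρ) * (√2 ^ k)⁻¹ := by
        rw [show j₀ - (k + 1) = (j₀ - 1) - k by ring, zpow_sub₀ (by positivity), zpow_natCast]
        field_simp
    _ ≤ 1 * (√2)⁻¹ ^ k := by
        rw [inv_pow]; gcongr; exact (div_le_one hρ).2 hj₀.le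
    _ ≤ (3 / 4) ^ k := by rw [one_mul]; gcongr; exact inv_sqrt_two_le

lemma tsum_annulus_coeff_le {ρ : ℝ} (hρ : 0 < ρ) :
    ∑' j : ℤ, ENNReal.ofReal ((2:ℝ) ^ ((j:ℝ) / 2) * (max ρ (2 ^ (j - 1) / ρ))⁻¹) ≤ 16 := by
  obtain ⟨j₀, hlow, hhigh⟩ : ∃ j₀ : ℤ, ρ ∈ Set.Ioc (√2 ^ (j₀ - 1)) (√2 ^ j₀) := by
    obtain ⟨N, hN⟩ := exists_mem_Ioc_zpow hρ (by rw [Real.lt_sqrt] <;> norm_num : (1:ℝ) < √2)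
    exact ⟨N + 1, by simpa using hN⟩
  calc _ ≤ 2 * 2 * (1 - ENNReal.ofReal (3 / 4))⁻¹ := by
        refine ENNReal.tsum_int_le_of_geometric_decay j₀ (fun k => ?_) (fun k => ?_)
        all_goals
          rw [two_rpow_int_div_two, ← ENNReal.ofReal_ofNat 2, ← ENNReal.ofReal_pow (by norm_num),
            ← ENNReal.ofReal_mul (by norm_num)]
          refine ENNReal.ofReal_le_ofReal ?_
        · exact sqrt_two_zpow_add_mul_inv_max_le hρ hhigh k
        · exact (sqrt_two_zpow_sub_mul_inv_max_le hρ hlow k).trans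
            (le_mul_of_one_le_left (by positivity) one_le_two)
    _ = 16 := by
        rw [← ENNReal.ofReal_one, ← ENNReal.ofReal_sub _ (by norm_num),
          ← ENNReal.ofReal_inv_of_pos (by norm_num)]
        norm_num

theorem eLpNorm_restrict_le_of_le_weight {α E : Type*} [MeasurableSpace α] [NormedAddCommGroup E]
    [NormedSpace ℝ E] {μ : Measure α} {S : Set α} (hS : MeasurableSet S) {g : α → ℝ} {w : ℝ}
    (hw : 0 < w) (hg : ∀ x ∈ S, w ≤ g x) (f : α → E) (p : ℝ≥0∞) :
    eLpNorm f p (μ.restrict S) ≤ ENNReal.ofReal w⁻¹ * eLpNorm (fun x => g x • f x) p μ := by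
  have hpt : ∀ᵐ x ∂μ.restrict S, ‖f x‖ ≤ ‖w⁻¹ • g x • f x‖ := by
    filter_upwards [ae_restrict_mem hS] with x hx
    have hgx : 0 ≤ g x := hw.le.trans (hg x hx)
    rw [norm_smul, norm_smul, Real.norm_of_nonneg (inv_nonneg.2 hw.le), Real.norm_of_nonneg hgx,
      ← mul_assoc]
    exact le_mul_of_one_le_left (norm_nonneg _) ((one_le_inv_mul₀ hw).2 (hg x hx))
  calc eLpNorm f p (μ.restrict S)
      ≤ eLpNorm (fun x => w⁻¹ • g x • f x) p (μ.restrict S) := eLpNorm_mono_ae hpt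
    _ = ‖w⁻¹‖ₑ * eLpNorm (fun x => g x • f x) p (μ.restrict S) := eLpNorm_const_smul _ _ _ _
    _ ≤ ENNReal.ofReal w⁻¹ * eLpNorm (fun x => g x • f x) p μ := by
        rw [Real.enorm_eq_ofReal (inv_nonneg.2 hw.le)]
        gcongr
        exact Measure.restrict_le_self

lemma max_sqrt_le_rpow_half {R t : ℝ} (hR : 0 < R) (ht : 0 ≤ t) :
    max √R (t / √R) ≤ (R + t ^ 2 / R) ^ ((1:ℝ)/2) := by
  rw [← Real.sqrt_eq_rpow]
  refine max_le (Real.sqrt_le_sqrt (le_add_of_nonneg_right (by positivity))) ?_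
  calc t / √R = √(t ^ 2 / R) := by rw [Real.sqrt_div' _ hR.le, Real.sqrt_sq ht]
    _ ≤ √(R + t ^ 2 / R) := Real.sqrt_le_sqrt (le_add_of_nonneg_left hR.le)

theorem weight_to_Xstar_general (n m : ℕ)
    (u : Pt n m → ℂ) (R : ℝ) (hR : 0 < R) :
    normXstar u ≤
      16 * eLpNorm (fun p : Pt n m => ((R + ‖p.1‖ ^ 2 / R) ^ ((1:ℝ)/2)) • u p) 2 volume := by
  set W := eLpNorm (fun p : Pt n m => ((R + ‖p.1‖ ^ 2 / R) ^ ((1:ℝ)/2)) • u p) 2 volume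
  have hannulus : ∀ j : ℤ, L2 u {p : Pt n m | (2:ℝ)^(j-1) ≤ ‖p.1‖ ∧ ‖p.1‖ ≤ (2:ℝ)^j} ≤
      ENNReal.ofReal (max √R (2 ^ (j - 1) / √R))⁻¹ * W := fun j =>
    eLpNorm_restrict_le_of_le_weight
      ((measurableSet_le measurable_const measurable_fst.norm).inter
        (measurableSet_le measurable_fst.norm measurable_const))
      (lt_max_of_lt_left (Real.sqrt_pos.2 hR))
      (fun p hp => le_trans (by gcongr; exact hp.1) (max_sqrt_le_rpow_half hR (norm_nonneg p.1)))
      u 2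
  calc normXstar u
      ≤ ∑' j : ℤ, ENNReal.ofReal ((2:ℝ) ^ ((j:ℝ)/2)) *
          (ENNReal.ofReal (max √R (2 ^ (j - 1) / √R))⁻¹ * W) :=
        ENNReal.tsum_le_tsum fun j => by gcongr; exact hannulus j
    _ = (∑' j : ℤ, ENNReal.ofReal ((2:ℝ) ^ ((j:ℝ)/2) * (max √R (2 ^ (j - 1) / √R))⁻¹)) * W := by
        rw [← ENNReal.tsum_mul_right]
        refine tsum_congr fun j => ?_
        rw [ENNReal.ofReal_mul (by positivity), mul_assoc]
    _ ≤ 16 * W := by gcongr; exact tsum_annulus_coeff_le (Real.sqrt_pos.2 hR)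

/-- `‖u‖_{X*} ≤ 16 ‖⟨x⟩_R u‖_{L²}`. -/
theorem weight_to_Xstar (n m : ℕ) (hn : 1 ≤ n) (hm : 1 ≤ m)
    (u : Pt n m → ℂ) (hu : Measurable u) (R : ℝ) (hR : 0 < R) :
    normXstar u ≤
      16 * eLpNorm (fun p : Pt n m => ((R + ‖p.1‖ ^ 2 / R) ^ ((1:ℝ)/2)) • u p) 2 volume :=
  weight_to_Xstar_general n m u R hR
end
end

section
/- Let n, m ≥ 1 and let γ > 0 and ε > 0. There exists a constant C = C(γ, ε) such that for every measurable function u on ℝ^n × ℝ^m, ‖⟨x⟩^{-γ/2-ε}·u‖_{L²(ℝ^{n+m})} ≤ C · sup_{R>0} ‖⟨x⟩_R^{-γ}·u‖_{L²(ℝ^{n+m})}. -/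
open MeasureTheory ENNReal Real

noncomputable section

variable {n m : ℕ}

/-! Split `ℝⁿ` into the dyadic shells `2ʲ ≤ ⟨x⟩² < 2ʲ⁺¹`. On the `j`-th shell, with `R = 2^{j/2}`,
one has `⟨x⟩ ≥ R` and `⟨x⟩_R² ≤ 3R`, so `⟨x⟩^{-γ/2-ε} ≤ 3^{γ/2} R^{-ε} ⟨x⟩_R^{-γ}`. Hence
`⟨x⟩^{-γ-2ε} |u|²` is dominated pointwise by `Σⱼ 3^γ 2^{-jε} ⟨x⟩_{2^{j/2}}^{-2γ} |u|²`; integrating,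
the geometric factors `2^{-jε}` sum to a finite constant. -/

theorem eLpNorm_two_sq_eq_lintegral {α E : Type*} [MeasurableSpace α] {μ : Measure α}
    [NormedAddCommGroup E] (f : α → E) : eLpNorm f 2 μ ^ 2 = ∫⁻ x, ‖f x‖ₑ ^ 2 ∂μ := by
  simpa using eLpNorm_nnreal_pow_eq_lintegral (f := f) (μ := μ) (p := 2) two_ne_zero

theorem eLpNorm_two_le_of_forall_exists_enorm_le {α ι E F : Type*} [MeasurableSpace α]
    {μ : Measure α} [Countable ι] [NormedAddCommGroup E] [NormedAddCommGroup F]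
    {f : α → E} {g : ι → α → F} (hg : ∀ i, AEStronglyMeasurable (g i) μ) (c : ι → ℝ≥0∞)
    {M : ℝ≥0∞} (hM : ∀ i, eLpNorm (g i) 2 μ ≤ M) (h : ∀ x, ∃ i, ‖f x‖ₑ ≤ c i * ‖g i x‖ₑ) :
    eLpNorm f 2 μ ≤ (∑' i, c i ^ 2) ^ (1 / 2 : ℝ) * M := by
  have hpt : ∀ x, ‖f x‖ₑ ^ 2 ≤ ∑' i, c i ^ 2 * ‖g i x‖ₑ ^ 2 := fun x => by
    obtain ⟨i, hi⟩ := h x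
    calc ‖f x‖ₑ ^ 2 ≤ (c i * ‖g i x‖ₑ) ^ 2 := by gcongr
      _ = c i ^ 2 * ‖g i x‖ₑ ^ 2 := mul_pow _ _ _
      _ ≤ _ := ENNReal.le_tsum (f := fun i => c i ^ 2 * ‖g i x‖ₑ ^ 2) i
  have hsq : eLpNorm f 2 μ ^ 2 ≤ (∑' i, c i ^ 2) * M ^ 2 :=
    calc eLpNorm f 2 μ ^ 2 ≤ ∫⁻ x, ∑' i, c i ^ 2 * ‖g i x‖ₑ ^ 2 ∂μ := by
          rw [eLpNorm_two_sq_eq_lintegral]; exact lintegral_mono hpt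
      _ = ∑' i, c i ^ 2 * eLpNorm (g i) 2 μ ^ 2 := by
        rw [lintegral_tsum fun i => ((hg i).enorm.pow_const 2).const_mul _]
        refine tsum_congr fun i => ?_
        rw [eLpNorm_two_sq_eq_lintegral, lintegral_const_mul'' _ ((hg i).enorm.pow_const 2)]
      _ ≤ ∑' i, c i ^ 2 * M ^ 2 := by gcongr with i; exact hM i
      _ = (∑' i, c i ^ 2) * M ^ 2 := ENNReal.tsum_mul_right
  calc eLpNorm f 2 μ = (eLpNorm f 2 μ ^ 2) ^ (1 / 2 : ℝ) := by
        rw [← ENNReal.rpow_natCast, ← ENNReal.rpow_mul]; norm_num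
    _ ≤ ((∑' i, c i ^ 2) * M ^ 2) ^ (1 / 2 : ℝ) := by gcongr
    _ = (∑' i, c i ^ 2) ^ (1 / 2 : ℝ) * M := by
        rw [ENNReal.mul_rpow_of_nonneg _ _ (by norm_num), ← ENNReal.rpow_natCast,
          ← ENNReal.rpow_mul]
        norm_num

theorem ENNReal.tsum_ofReal_mul_pow_sq_ne_top {a q : ℝ} (hq₀ : 0 ≤ q) (hq₁ : q < 1) :
    ∑' j : ℕ, ENNReal.ofReal (a * q ^ j) ^ 2 ≠ ⊤ := by
  have hq : ENNReal.ofReal q ^ 2 < 1 := pow_lt_one₀ zero_le (ofReal_lt_one.2 hq₁) two_ne_zero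
  have hterm (j : ℕ) :
      ENNReal.ofReal (a * q ^ j) ^ 2 = ENNReal.ofReal a ^ 2 * (ENNReal.ofReal q ^ 2) ^ j := by
    rw [ofReal_mul' (by positivity), ofReal_pow hq₀, mul_pow, ← pow_mul, ← pow_mul, mul_comm j]
  simp_rw [hterm, ENNReal.tsum_mul_left, ENNReal.tsum_geometric]
  exact mul_ne_top (by simp) (inv_ne_top.2 (tsub_pos_of_lt hq).ne')

theorem one_add_rpow_le_mul_rpow_add_div {γ ε R s : ℝ} (hγ : 0 ≤ γ) (hε : 0 ≤ ε) (hR : 0 < R)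
    (hs : 0 ≤ s) (hlow : R ^ 2 ≤ 1 + s) (hup : 1 + s ≤ 2 * R ^ 2) :
    (1 + s) ^ ((-(γ / 2) - ε) / 2) ≤ 3 ^ (γ / 2) * R ^ (-ε) * (R + s / R) ^ (-γ / 2) := by
  have h3R : R + s / R ≤ 3 * R := by
    have : s / R ≤ 2 * R := by rw [div_le_iff₀ hR]; nlinarith
    linarith
  calc (1 + s) ^ ((-(γ / 2) - ε) / 2) ≤ (R ^ 2) ^ ((-(γ / 2) - ε) / 2) :=
        rpow_le_rpow_of_nonpos (by positivity) hlow (by linarith)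
    _ = 3 ^ (γ / 2) * R ^ (-ε) * (3 * R) ^ (-γ / 2) := by
        rw [← Real.rpow_natCast, ← Real.rpow_mul hR.le, Real.mul_rpow (by norm_num) hR.le,
          mul_mul_mul_comm, ← Real.rpow_add (by norm_num), ← Real.rpow_add hR]
        ring_nf
        simp
    _ ≤ 3 ^ (γ / 2) * R ^ (-ε) * (R + s / R) ^ (-γ / 2) :=
        mul_le_mul_of_nonneg_left (rpow_le_rpow_of_nonpos (by positivity) h3R (by linarith))
          (by positivity)

theorem exists_one_add_rpow_le_sqrt_two_pow {γ ε s : ℝ} (hγ : 0 ≤ γ) (hε : 0 ≤ ε) (hs : 0 ≤ s) :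
    ∃ j : ℕ, (1 + s) ^ ((-(γ / 2) - ε) / 2) ≤
      3 ^ (γ / 2) * (√2 ^ (-ε)) ^ j * (√2 ^ j + s / √2 ^ j) ^ (-γ / 2) := by
  obtain ⟨j, hlow, hup⟩ :=
    exists_nat_pow_near (le_add_of_nonneg_right hs) (_root_.one_lt_two : (1 : ℝ) < 2)
  have hR : (√2 ^ j) ^ 2 = 2 ^ j := by rw [← pow_mul, mul_comm, pow_mul, sq_sqrt zero_le_two]
  refine ⟨j, ?_⟩
  rw [rpow_pow_comm (sqrt_nonneg 2)]
  exact one_add_rpow_le_mul_rpow_add_div hγ hε (by positivity) hs (hR ▸ hlow)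
    (by rw [hR, ← pow_succ']; exact hup.le)

theorem weight1_general (n m : ℕ)
    (γ ε : ℝ) (hγ : 0 < γ) (hε : 0 < ε) :
    ∃ C : ℝ≥0∞, C ≠ ⊤ ∧ ∀ u : Pt n m → ℂ, Measurable u →
      eLpNorm (fun p : Pt n m =>
          ((1 + ‖p.1‖ ^ 2) ^ ((-(γ/2) - ε)/2)) • u p) 2 volume ≤
        C * ⨆ (R : ℝ) (_ : 0 < R),
          eLpNorm (fun p : Pt n m =>
            ((R + ‖p.1‖ ^ 2 / R) ^ (-γ/2)) • u p) 2 volume := by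
  set q : ℝ := √2 ^ (-ε)
  have hq : q < 1 := rpow_lt_one_of_one_lt_of_neg one_lt_sqrt_two (by linarith)
  set c : ℕ → ℝ≥0∞ := fun j => ENNReal.ofReal (3 ^ (γ / 2) * q ^ j)
  refine ⟨(∑' j, c j ^ 2) ^ (1 / 2 : ℝ),
    rpow_ne_top_of_nonneg (by norm_num) (tsum_ofReal_mul_pow_sq_ne_top (by positivity) hq),
    fun u hu => eLpNorm_two_le_of_forall_exists_enorm_le (g := fun (j : ℕ) p =>
      ((√2 ^ j + ‖p.1‖ ^ 2 / √2 ^ j) ^ (-γ/2)) • u p) (fun j => ?_) c (fun j => ?_) fun p => ?_⟩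
  · fun_prop
  · exact le_iSup₂ (f := fun (R : ℝ) (_ : 0 < R) => eLpNorm (fun p : Pt n m =>
      ((R + ‖p.1‖ ^ 2 / R) ^ (-γ/2)) • u p) 2 volume) (√2 ^ j) (by positivity)
  · obtain ⟨j, hj⟩ := exists_one_add_rpow_le_sqrt_two_pow hγ.le hε.le (sq_nonneg ‖p.1‖)
    refine ⟨j, ?_⟩
    simp only [enorm_smul, c, ← mul_assoc]
    rw [Real.enorm_of_nonneg (by positivity), Real.enorm_of_nonneg (by positivity),
      ← ofReal_mul (by positivity)]
    gcongr

/-- the weight inequality (2.17) of the paper. -/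
theorem weight1 (n m : ℕ) (hn : 1 ≤ n) (hm : 1 ≤ m)
    (γ ε : ℝ) (hγ : 0 < γ) (hε : 0 < ε) :
    ∃ C : ℝ≥0∞, C ≠ ⊤ ∧ ∀ u : Pt n m → ℂ, Measurable u →
      eLpNorm (fun p : Pt n m =>
          ((1 + ‖p.1‖ ^ 2) ^ ((-(γ/2) - ε)/2)) • u p) 2 volume ≤
        C * ⨆ (R : ℝ) (_ : 0 < R),
          eLpNorm (fun p : Pt n m =>
            ((R + ‖p.1‖ ^ 2 / R) ^ (-γ/2)) • u p) 2 volume :=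
  weight1_general n m γ ε hγ hε
end
end
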